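/- For the CHSH game with each party's input independently Bernoulli distributed with parameter p ∈ [0,1], the classical value is c*(w_{CHSH,p}) = 1 − p² if 0 ≤ p ≤ 1/2, and c*(w_{CHSH,p}) = 2p − p² if 1/2 ≤ p ≤ 1. -/

import Mathlib

open scoped BigOperators

namespace TC

/-- A behavior: a conditional probability distribution over joint decisions given
joint observations. -/
def IsBehavior {n : ℕ} {O D : Fin n → Type} [∀ i, Fintype (D i)]
    (p : (∀ i, O i) → (∀ i, D i) → ℝ) : Prop :=
  (∀ o d, 0 ≤ p o d) ∧ ∀ o, ∑ d, p o d = 1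

/-- The behavior of a deterministic strategy `f`. -/
def detBehavior {n : ℕ} {O D : Fin n → Type} [∀ i, DecidableEq (D i)]
    (f : ∀ i, O i → D i) : (∀ i, O i) → (∀ i, D i) → ℝ :=
  fun o d => ∏ i, if d i = f i (o i) then (1 : ℝ) else 0

/-- Expected utility of a behavior `p` with respect to a weighted utility array `w`. -/
def expUtility {n : ℕ} {O D : Fin n → Type} [∀ i, Fintype (O i)] [∀ i, Fintype (D i)]
    (w p : (∀ i, O i) → (∀ i, D i) → ℝ) : ℝ :=
  ∑ o, ∑ d, p o d * w o d

/-- A quantum strategy: a finite dimension for each party, a projective measurement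
(indexed by decisions) for each party and observation, and a shared unit state vector. -/
structure QStrategy {n : ℕ} (O D : Fin n → Type) [∀ i, Fintype (O i)] [∀ i, Fintype (D i)] where
  dim : Fin n → ℕ
  dim_pos : ∀ i, 0 < dim i
  proj : ∀ i, O i → D i → Matrix (Fin (dim i)) (Fin (dim i)) ℂ
  proj_herm : ∀ i o d, (proj i o d).IsHermitian
  proj_idem : ∀ i o d, proj i o d * proj i o d = proj i o d
  proj_orth : ∀ i o d d', d ≠ d' → proj i o d * proj i o d' = 0
  proj_sum : ∀ i o, ∑ d, proj i o d = 1
  state : (∀ i, Fin (dim i)) → ℂ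
  state_norm : ∑ x, Complex.normSq (state x) = 1

/-- The behavior determined by a family of "projectors" (measurement operators, one for each
party, observation and decision) and a shared state:
`p(d|o) = ⟨ψ, (⊗ᵢ Πᵢ^{(dᵢ|oᵢ)}) ψ⟩`. -/
noncomputable def projBehavior {n : ℕ} {O D : Fin n → Type} (dim : Fin n → ℕ)
    (proj : ∀ i, O i → D i → Matrix (Fin (dim i)) (Fin (dim i)) ℂ)
    (ψ : (∀ i, Fin (dim i)) → ℂ) : (∀ i, O i) → (∀ i, D i) → ℝ :=
  fun o d =>
    (∑ x, ∑ y, (starRingEnd ℂ) (ψ x) * (∏ i, proj i (o i) (d i) (x i) (y i)) * ψ y).re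

/-- The quantum behavior of a quantum strategy. -/
noncomputable def QStrategy.behavior {n : ℕ} {O D : Fin n → Type}
    [∀ i, Fintype (O i)] [∀ i, Fintype (D i)] (S : QStrategy O D) :
    (∀ i, O i) → (∀ i, D i) → ℝ :=
  projBehavior S.dim S.proj S.state

/-- The classical value: the maximum expected utility over deterministic strategies. -/
noncomputable def cValue {n : ℕ} {O D : Fin n → Type} [∀ i, Fintype (O i)] [∀ i, Fintype (D i)]
    [∀ i, DecidableEq (D i)] (w : (∀ i, O i) → (∀ i, D i) → ℝ) : ℝ :=
  ⨆ f : ∀ i, O i → D i, expUtility w (detBehavior f)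

/-- The quantum value: the supremum of expected utilities over all quantum strategies
(of all finite dimensions). -/
noncomputable def qValue {n : ℕ} {O D : Fin n → Type} [∀ i, Fintype (O i)] [∀ i, Fintype (D i)]
    (w : (∀ i, O i) → (∀ i, D i) → ℝ) : ℝ :=
  sSup {x : ℝ | ∃ S : QStrategy O D, x = expUtility w S.behavior}

/-- The gap `g(w) = q*(w) − c*(w)`. -/
noncomputable def gap {n : ℕ} {O D : Fin n → Type} [∀ i, Fintype (O i)] [∀ i, Fintype (D i)]
    [∀ i, DecidableEq (D i)] (w : (∀ i, O i) → (∀ i, D i) → ℝ) : ℝ :=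
  qValue w - cValue w

/-- `w` is gapped if its gap is positive. -/
def Gapped {n : ℕ} {O D : Fin n → Type} [∀ i, Fintype (O i)] [∀ i, Fintype (D i)]
    [∀ i, DecidableEq (D i)] (w : (∀ i, O i) → (∀ i, D i) → ℝ) : Prop :=
  0 < gap w

/-- A quantum strategy is degenerate if some party uses a trivial (zero or identity)
measurement operator. -/
def QStrategy.Degenerate {n : ℕ} {O D : Fin n → Type}
    [∀ i, Fintype (O i)] [∀ i, Fintype (D i)] (S : QStrategy O D) : Prop :=
  ∃ i o d, S.proj i o d = 0 ∨ S.proj i o d = 1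

/-- A classical behavior: a convex combination of deterministic behaviors. -/
def IsClassicalBehavior {n : ℕ} {O D : Fin n → Type}
    [∀ i, Fintype (O i)] [∀ i, DecidableEq (O i)] [∀ i, Fintype (D i)] [∀ i, DecidableEq (D i)]
    (p : (∀ i, O i) → (∀ i, D i) → ℝ) : Prop :=
  ∃ μ : (∀ i, O i → D i) → ℝ, (∀ f, 0 ≤ μ f) ∧ ∑ f, μ f = 1 ∧
    ∀ o d, p o d = ∑ f, μ f * detBehavior f o d

/-- The lossy behavior built from a family of measurement operators, a shared state, a fallback
deterministic strategy `f`, and efficiencies `η`: the sum over subsets `T` of parties that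
experience loss, weighted by the loss probabilities, of the behavior of the `T`-semiclassical
strategy (parties in `T` use the trivial projectors implementing `f` locally). -/
noncomputable def lossyProjBehavior {n : ℕ} {O D : Fin n → Type} [∀ i, DecidableEq (D i)]
    (dim : Fin n → ℕ) (proj : ∀ i, O i → D i → Matrix (Fin (dim i)) (Fin (dim i)) ℂ)
    (ψ : (∀ i, Fin (dim i)) → ℂ) (f : ∀ i, O i → D i) (η : Fin n → ℝ) :
    (∀ i, O i) → (∀ i, D i) → ℝ :=
  fun o d => ∑ T : Finset (Fin n),
    ((∏ i ∈ T, (1 - η i)) * ∏ i ∈ Tᶜ, η i) *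
      projBehavior dim
        (fun i oi di =>
          if i ∈ T then (if di = f i oi then (1 : Matrix (Fin (dim i)) (Fin (dim i)) ℂ) else 0)
          else proj i oi di)
        ψ o d

/-- The `{ηᵢ}`-lossy behavior of a pair `(S_q, S_d)` of a quantum strategy and a fallback
deterministic strategy. -/
noncomputable def lossyBehavior {n : ℕ} {O D : Fin n → Type}
    [∀ i, Fintype (O i)] [∀ i, Fintype (D i)] [∀ i, DecidableEq (D i)]
    (S : QStrategy O D) (f : ∀ i, O i → D i) (η : Fin n → ℝ) :
    (∀ i, O i) → (∀ i, D i) → ℝ :=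
  lossyProjBehavior S.dim S.proj S.state f η

/-- The `ν`-noisy behavior of a quantum strategy:
`p_o^d(ν) = tr[(⊗ᵢ Πᵢ^{(dᵢ|oᵢ)}) ((1−ν)|ψ⟩⟨ψ| + ν π)]` with `π` the maximally mixed state. -/
noncomputable def noisyBehavior {n : ℕ} {O D : Fin n → Type}
    [∀ i, Fintype (O i)] [∀ i, Fintype (D i)] (S : QStrategy O D) (ν : ℝ) :
    (∀ i, O i) → (∀ i, D i) → ℝ :=
  fun o d =>
    (∑ x, ∑ y, (∏ i, S.proj i (o i) (d i) (x i) (y i)) *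
      ((1 - ν) * (S.state y * (starRingEnd ℂ) (S.state x)) +
        ((ν : ℂ) / (∏ i, (S.dim i : ℂ))) * (if x = y then 1 else 0))).re

end TC

namespace TC

/-- The CHSH weighted utility array with each party's input independently Bernoulli
distributed with parameter `p`: `w(o;d) = p^{o₁+o₂}(1−p)^{2−o₁−o₂}·χ[(o₁∧o₂) = d₁⊕d₂]`
(observation `true` is drawn with probability `p`). -/
noncomputable def wCHSHp (p : ℝ) : (Fin 2 → Bool) → (Fin 2 → Bool) → ℝ :=
  fun o d => (if o 0 then p else 1 - p) * (if o 1 then p else 1 - p) *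
    (if (o 0 && o 1) = (d 0 != d 1) then 1 else 0)

end TC

/-! A deterministic strategy `f` wins on at most three of the four input pairs: XOR-ing the
four winning conditions `f₀ a ⊕ f₁ b = a ∧ b`, each value `fᵢ x` occurs twice on the left, which
therefore cancels, while the right sides XOR to `1`. As the input probabilities
`p^{o₁+o₂}(1−p)^{2−o₁−o₂}` sum to one and are all at least `min(p, 1−p)²`, every strategy scores
at most `1 − min(p, 1−p)²`. This is attained by losing only on the least likely input pair:
`(1,1)` (always answer `0`) when `p ≤ 1/2`, and `(0,0)` (`d₁ = o₁`, `d₂ = ¬o₂`) when `p ≥ 1/2`. -/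

namespace TC

section General

variable {n : ℕ} {O D : Fin n → Type} [∀ i, Fintype (O i)] [∀ i, Fintype (D i)]
  [∀ i, DecidableEq (D i)]

omit [∀ i, Fintype (O i)] [∀ i, Fintype (D i)] in
lemma detBehavior_apply (f : ∀ i, O i → D i) (o : ∀ i, O i) (d : ∀ i, D i) :
    detBehavior f o d = if d = fun i => f i (o i) then 1 else 0 := by
  simp [detBehavior, Fintype.prod_boole, funext_iff]

lemma expUtility_detBehavior (w : (∀ i, O i) → (∀ i, D i) → ℝ) (f : ∀ i, O i → D i) :
    expUtility w (detBehavior f) = ∑ o, w o fun i => f i (o i) := by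
  simp only [expUtility, detBehavior_apply, ite_mul, one_mul, zero_mul, Finset.sum_ite_eq',
    Finset.mem_univ, if_true]

lemma cValue_eq_of_forall_le (w : (∀ i, O i) → (∀ i, D i) → ℝ) {c : ℝ} (f₀ : ∀ i, O i → D i)
    (hf₀ : expUtility w (detBehavior f₀) = c) (h : ∀ f, expUtility w (detBehavior f) ≤ c) :
    cValue w = c := by
  have : Nonempty (∀ i, O i → D i) := ⟨f₀⟩
  exact le_antisymm (ciSup_le h) (hf₀ ▸ le_ciSup (f := fun f => expUtility w (detBehavior f))
    (Set.finite_range _).bddAbove f₀)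

end General

lemma sum_ite_le_sum_sub {ι : Type*} [Fintype ι] (q : ι → ℝ) (hq : ∀ i, 0 ≤ q i)
    (P : ι → Prop) [DecidablePred P] {i₀ : ι} (h : ¬ P i₀) :
    ∑ i, (if P i then q i else 0) ≤ ∑ i, q i - q i₀ := by
  classical
  rw [Finset.sum_ite, Finset.sum_const_zero, add_zero,
    ← Finset.sum_erase_eq_sub (Finset.mem_univ i₀)]
  exact Finset.sum_le_sum_of_subset_of_nonneg (fun i hi => by
    simp only [Finset.mem_filter, Finset.mem_univ, true_and] at hi
    exact Finset.mem_erase.2 ⟨fun h' => h (h' ▸ hi), Finset.mem_univ i⟩)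
    fun i _ _ => hq i

lemma sum_ite_eq_sum_sub {ι : Type*} [Fintype ι] [DecidableEq ι] (q : ι → ℝ)
    (P : ι → Prop) [DecidablePred P] {i₀ : ι} (h : ∀ i, P i ↔ i ≠ i₀) :
    ∑ i, (if P i then q i else 0) = ∑ i, q i - q i₀ := by
  rw [← Finset.sum_filter, ← Finset.sum_erase_eq_sub (Finset.mem_univ i₀)]
  congr 1
  ext i
  simp [h]

section CHSH

def chshInputProb (p : ℝ) (o : Fin 2 → Bool) : ℝ :=
  ∏ i, if o i then p else 1 - p

variable {p : ℝ}

lemma wCHSHp_eq_ite (o d : Fin 2 → Bool) :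
    wCHSHp p o d = if (o 0 && o 1) = (d 0 != d 1) then chshInputProb p o else 0 := by
  simp [wCHSHp, chshInputProb, Fin.prod_univ_two]

lemma sum_chshInputProb : ∑ o, chshInputProb p o = 1 :=
  calc ∑ o, chshInputProb p o = (∑ b : Bool, if b then p else 1 - p) ^ 2 :=
        (Fintype.sum_pow (fun b : Bool => if b then p else 1 - p) 2).symm
    _ = 1 := by simp

lemma chshInputProb_nonneg (hp0 : 0 ≤ p) (hp1 : p ≤ 1) (o : Fin 2 → Bool) :
    0 ≤ chshInputProb p o :=
  Finset.prod_nonneg fun i _ => by split_ifs <;> linarith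

lemma min_sq_le_chshInputProb (hp0 : 0 ≤ p) (hp1 : p ≤ 1) (o : Fin 2 → Bool) :
    min p (1 - p) ^ 2 ≤ chshInputProb p o := by
  have hmin : 0 ≤ min p (1 - p) := le_min hp0 (by linarith)
  calc min p (1 - p) ^ 2 = ∏ _i : Fin 2, min p (1 - p) := by simp
    _ ≤ chshInputProb p o :=
      Finset.prod_le_prod (fun _ _ => hmin) fun i _ => by split_ifs <;> simp

lemma chsh_exists_loss (f : ∀ _ : Fin 2, Bool → Bool) :
    ∃ o : Fin 2 → Bool, (o 0 && o 1) ≠ (f 0 (o 0) != f 1 (o 1)) := by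
  revert f
  decide

lemma expUtility_wCHSHp_le (hp0 : 0 ≤ p) (hp1 : p ≤ 1) (f : ∀ _ : Fin 2, Bool → Bool) :
    expUtility (wCHSHp p) (detBehavior f) ≤ 1 - min p (1 - p) ^ 2 := by
  obtain ⟨o₀, hlost⟩ := chsh_exists_loss f
  calc expUtility (wCHSHp p) (detBehavior f)
      = ∑ o, if (o 0 && o 1) = (f 0 (o 0) != f 1 (o 1)) then chshInputProb p o else 0 := by
        simp only [expUtility_detBehavior, wCHSHp_eq_ite]
    _ ≤ ∑ o, chshInputProb p o - chshInputProb p o₀ :=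
        sum_ite_le_sum_sub _ (chshInputProb_nonneg hp0 hp1) _ hlost
    _ ≤ 1 - min p (1 - p) ^ 2 := by
        linarith [sum_chshInputProb (p := p), min_sq_le_chshInputProb hp0 hp1 o₀]

lemma expUtility_wCHSHp_of_loses_only (f : ∀ _ : Fin 2, Bool → Bool) (o₀ : Fin 2 → Bool)
    (h : ∀ o, (o 0 && o 1) = (f 0 (o 0) != f 1 (o 1)) ↔ o ≠ o₀) :
    expUtility (wCHSHp p) (detBehavior f) = 1 - chshInputProb p o₀ := by
  simp only [expUtility_detBehavior, wCHSHp_eq_ite]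
  rw [sum_ite_eq_sum_sub _ _ h, sum_chshInputProb]

theorem cValue_wCHSHp_eq_one_sub_min_sq (hp0 : 0 ≤ p) (hp1 : p ≤ 1) :
    cValue (O := fun _ : Fin 2 => Bool) (D := fun _ : Fin 2 => Bool) (wCHSHp p)
      = 1 - min p (1 - p) ^ 2 := by
  rcases le_total p (1 - p) with hp | hp
  · refine cValue_eq_of_forall_le _ (fun _ _ => false) ?_ (expUtility_wCHSHp_le hp0 hp1)
    rw [expUtility_wCHSHp_of_loses_only _ (fun _ => true) (by decide), min_eq_left hp]
    simp [chshInputProb]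
  · refine cValue_eq_of_forall_le _ ![fun b => b, fun b => !b] ?_ (expUtility_wCHSHp_le hp0 hp1)
    rw [expUtility_wCHSHp_of_loses_only _ (fun _ => false) (by decide), min_eq_right hp]
    simp [chshInputProb]

end CHSH

end TC

open TC in
/-- the classical value of the CHSH game with independent Bernoulli(p) inputs is
`1 − p²` for `0 ≤ p ≤ 1/2` and `2p − p²` for `1/2 ≤ p ≤ 1`. -/
theorem cValue_wCHSHp (p : ℝ) (hp0 : 0 ≤ p) (hp1 : p ≤ 1) :
    (p ≤ 1/2 →
      cValue (O := fun _ : Fin 2 => Bool) (D := fun _ : Fin 2 => Bool) (wCHSHp p)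
        = 1 - p ^ 2) ∧
    (1/2 ≤ p →
      cValue (O := fun _ : Fin 2 => Bool) (D := fun _ : Fin 2 => Bool) (wCHSHp p)
        = 2 * p - p ^ 2) := by
  rw [cValue_wCHSHp_eq_one_sub_min_sq hp0 hp1]
  refine ⟨fun hp => ?_, fun hp => ?_⟩
  · rw [min_eq_left (by linarith)]
  · rw [min_eq_right (by linarith)]
    ring
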